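/- Let Ω ⊂ ℝ^N be open, ν a unit vector, λ₀ ∈ ℝ, and u ∈ C¹(Ω). Suppose u(x) ≤ u(x_μ^ν) for all x ∈ Ω_μ^ν and all μ ∈ (a(ν), λ₀] (where x_μ^ν is the reflection of x across {x·ν = μ}). If x ∈ Ω satisfies x·ν = λ₀, if the segment from x in direction -ν stays in Ω for small parameter, and if there exist sequences λ_n ↓ λ₀ and x_n → x with x_n·ν < λ_n and u(x_n) > u((x_n)_{λ_n}^ν), then ∂u/∂ν(x) ≤ 0. -/

import Mathlib

open Filter

/-- at a point `x` on the hyperplane `{x·ν = λ₀}` approached by points `xₙ`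
where the moving-plane inequality fails for positions `λₙ ↓ λ₀`, the directional
derivative `∂u/∂ν(x)` is nonpositive. -/
theorem stmt_10 (N : ℕ) (Ω : Set (EuclideanSpace ℝ (Fin N))) (hΩ : IsOpen Ω)
    (ν : EuclideanSpace ℝ (Fin N)) (hν : ‖ν‖ = 1)
    (a lam0 : ℝ) (ha : a < lam0)
    (u : EuclideanSpace ℝ (Fin N) → ℝ) (hu : ContDiffOn ℝ 1 u Ω)
    (hmono : ∀ μ ∈ Set.Ioc a lam0, ∀ y ∈ Ω, (inner ℝ y ν : ℝ) < μ →
      u y ≤ u (y + (2 * (μ - (inner ℝ y ν : ℝ))) • ν))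
    (x : EuclideanSpace ℝ (Fin N)) (hx : x ∈ Ω) (hxlam : (inner ℝ x ν : ℝ) = lam0)
    (hseg : ∃ ε > (0:ℝ), ∀ t ∈ Set.Icc (0:ℝ) ε, x - t • ν ∈ Ω)
    (lamn : ℕ → ℝ) (hlamn : ∀ n, lam0 < lamn n)
    (hlimlam : Tendsto lamn atTop (nhds lam0))
    (xn : ℕ → EuclideanSpace ℝ (Fin N)) (hxnΩ : ∀ n, xn n ∈ Ω)
    (hlimx : Tendsto xn atTop (nhds x))
    (hxncap : ∀ n, (inner ℝ (xn n) ν : ℝ) < lamn n)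
    (hxnrefl : ∀ n, xn n + (2 * (lamn n - (inner ℝ (xn n) ν : ℝ))) • ν ∈ Ω)
    (hgt : ∀ n, u (xn n + (2 * (lamn n - (inner ℝ (xn n) ν : ℝ))) • ν) < u (xn n)) :
    fderiv ℝ u x ν ≤ 0 := by
  by_contra h
  push_neg at h
  set c : ℝ := fderiv ℝ u x ν with hc
  -- the gradient is continuous on Ω
  have hfd : ContinuousOn (fun y => fderiv ℝ u y) Ω :=
    hu.continuousOn_fderiv_of_isOpen hΩ le_rfl
  have hfdν : ContinuousOn (fun y => fderiv ℝ u y ν) Ω :=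
    (ContinuousLinearMap.apply ℝ ℝ ν).continuous.comp_continuousOn hfd
  have hca : ContinuousAt (fun y => fderiv ℝ u y ν) x :=
    hfdν.continuousAt (hΩ.mem_nhds hx)
  -- a ball where the directional derivative is > c/2
  have hev : ∀ᶠ y in nhds x, y ∈ Ω ∧ c / 2 < fderiv ℝ u y ν := by
    have h1 : ∀ᶠ y in nhds x, y ∈ Ω := hΩ.mem_nhds hx
    have h2 : ∀ᶠ y in nhds x, c / 2 < fderiv ℝ u y ν :=
      hca.eventually_const_lt (by linarith)
    exact h1.and h2
  obtain ⟨δ, hδpos, hδ⟩ := Metric.eventually_nhds_iff_ball.mp hev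
  -- t n → 0
  have hinner : Tendsto (fun n => (inner ℝ (xn n) ν : ℝ)) atTop (nhds lam0) := by
    have := Tendsto.inner (𝕜 := ℝ) hlimx (tendsto_const_nhds (x := ν))
    rwa [hxlam] at this
  set t : ℕ → ℝ := fun n => 2 * (lamn n - (inner ℝ (xn n) ν : ℝ)) with ht
  have htpos : ∀ n, 0 < t n := fun n => by
    have := hxncap n; simp only [ht]; linarith
  have htlim : Tendsto t atTop (nhds 0) := by
    have : Tendsto (fun n => 2 * (lamn n - (inner ℝ (xn n) ν : ℝ))) atTop
        (nhds (2 * (lam0 - lam0))) := (hlimlam.sub hinner).const_mul 2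
    simpa using this
  -- eventually both xn is close and t n is small
  have hev2 : ∀ᶠ n in atTop, dist (xn n) x < δ / 2 ∧ t n < δ / 2 := by
    have h1 : ∀ᶠ n in atTop, dist (xn n) x < δ / 2 :=
      (Metric.tendsto_nhds.mp hlimx) _ (by linarith)
    have h2 : ∀ᶠ n in atTop, t n < δ / 2 :=
      htlim.eventually_lt_const (by linarith)
    exact h1.and h2
  obtain ⟨n, hn1, hn2⟩ := hev2.exists
  -- the segment stays in the ball
  have hmem : ∀ s ∈ Set.Icc (0:ℝ) (t n), xn n + s • ν ∈ Metric.ball x δ := by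
    intro s hs
    have : ‖xn n + s • ν - x‖ ≤ ‖xn n - x‖ + s * ‖ν‖ := by
      calc ‖xn n + s • ν - x‖ = ‖(xn n - x) + s • ν‖ := by rw [add_sub_right_comm]
        _ ≤ ‖xn n - x‖ + ‖s • ν‖ := norm_add_le _ _
        _ = ‖xn n - x‖ + |s| * ‖ν‖ := by rw [norm_smul, Real.norm_eq_abs]
        _ = ‖xn n - x‖ + s * ‖ν‖ := by rw [abs_of_nonneg hs.1]
    rw [Metric.mem_ball, dist_eq_norm]
    have hdn : ‖xn n - x‖ < δ / 2 := by rwa [← dist_eq_norm]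
    have : ‖xn n + s • ν - x‖ ≤ ‖xn n - x‖ + s := by rw [hν] at this; linarith [this]
    linarith [hs.2, hn2]
  -- derivative of u along the line
  have hder : ∀ s ∈ Set.Icc (0:ℝ) (t n),
      HasDerivAt (fun s => u (xn n + s • ν)) (fderiv ℝ u (xn n + s • ν) ν) s := by
    intro s hs
    have hpΩ : xn n + s • ν ∈ Ω := (hδ _ (hmem s hs)).1
    have hdiff : DifferentiableAt ℝ u (xn n + s • ν) :=
      ((hu.differentiableOn one_ne_zero).differentiableAt (hΩ.mem_nhds hpΩ))
    have hline : HasDerivAt (fun s : ℝ => xn n + s • ν) ν s := by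
      simpa using ((hasDerivAt_id s).smul_const ν).const_add (xn n)
    exact hdiff.hasFDerivAt.comp_hasDerivAt s hline
  -- strict monotonicity
  have hmono' : StrictMonoOn (fun s => u (xn n + s • ν)) (Set.Icc 0 (t n)) := by
    apply strictMonoOn_of_deriv_pos (convex_Icc (0:ℝ) (t n))
    · exact fun s hs => (hder s hs).continuousAt.continuousWithinAt
    · intro s hs
      rw [interior_Icc] at hs
      have hs' : s ∈ Set.Icc (0:ℝ) (t n) := ⟨hs.1.le, hs.2.le⟩
      rw [(hder s hs').deriv]
      have := (hδ _ (hmem s hs')).2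
      linarith
  have h01 : (0:ℝ) ∈ Set.Icc (0:ℝ) (t n) := ⟨le_rfl, (htpos n).le⟩
  have h02 : t n ∈ Set.Icc (0:ℝ) (t n) := ⟨(htpos n).le, le_rfl⟩
  have hlt := hmono' h01 h02 (htpos n)
  simp only [zero_smul, add_zero] at hlt
  exact absurd (hgt n) (not_lt.mpr hlt.le)
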